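/- Let n ≥ 1, let d be a positive integer, β > 0 and h real, and let ε = (ε_1, …, ε_n) be distributed according to the Curie-Weiss model. Then for every σ ∈ {-1,1}^n, P(ε = σ) = ∫_0^1 p^{#{i : σ_i = 1}} (1−p)^{#{i : σ_i = −1}} ν(dp), where ν is the probability measure on (0,1) with density (with respect to Lebesgue measure dp) equal to (1/Z_{d,β,h}) √(n/(π d β)) · (1/(4p(1−p))) · [p(1−p)]^{-n/2} exp(−(n/(4dβ)) ((1/2) ln(p/(1−p)) − h)²). In particular, the Curie-Weiss model is a mixture of laws of independent and identically distributed Bernoulli random variables. -/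

import Mathlib

open Filter Asymptotics MeasureTheory ProbabilityTheory
open scoped BigOperators Classical

/-- The spin value associated to a Boolean: `true ↦ 1`, `false ↦ -1`. -/
noncomputable def spin (b : Bool) : ℝ := if b then 1 else -1

/-- Boltzmann weight of a configuration in the Curie-Weiss model with parameters `d, β, h`. -/
noncomputable def cwWeight (n d : ℕ) (β h : ℝ) (σ : Fin n → Bool) : ℝ :=
  Real.exp ((d : ℝ) * β / (n : ℝ) * (∑ j, spin (σ j)) ^ 2 + h * ∑ j, spin (σ j))

/-- Partition function `Z_{d,β,h}` of the Curie-Weiss model on `n` sites. -/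
noncomputable def cwZ (n d : ℕ) (β h : ℝ) : ℝ :=
  ∑ σ : Fin n → Bool, cwWeight n d β h σ

/-- Probability of an event `E` under the Curie-Weiss model. -/
noncomputable def cwProb (n d : ℕ) (β h : ℝ) (E : Set (Fin n → Bool)) : ℝ :=
  (∑ σ : Fin n → Bool, if σ ∈ E then cwWeight n d β h σ else 0) / cwZ n d β h

/-- `Q_n^+` for the Curie-Weiss model. -/
noncomputable def Qplus (n d : ℕ) (β h : ℝ) : ℝ :=
  ⨆ x : ℝ, ⨆ v : {v : Fin n → ℝ // ∀ i, 1 ≤ v i},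
    cwProb n d β h {σ | ∑ i, v.1 i * spin (σ i) ∈ Set.Ioo (x - 1) (x + 1)}

/-- `Q_n` for the Curie-Weiss model. -/
noncomputable def Qfull (n d : ℕ) (β h : ℝ) : ℝ :=
  ⨆ x : ℝ, ⨆ v : {v : Fin n → ℝ // ∀ i, 1 ≤ |v i|},
    cwProb n d β h {σ | ∑ i, v.1 i * spin (σ i) ∈ Set.Ioo (x - 1) (x + 1)}

/-- Density (with respect to Lebesgue measure on `(0,1)`) of the mixing measure `ν` in the
Bernoulli-mixture representation of the Curie-Weiss model. -/
noncomputable def cwMixDensity (n d : ℕ) (β h : ℝ) (p : ℝ) : ℝ :=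
  (1 / cwZ n d β h) * Real.sqrt ((n : ℝ) / (Real.pi * d * β)) * (1 / (4 * p * (1 - p)))
    * (p * (1 - p)) ^ (-(n : ℝ) / 2)
    * Real.exp (-((n : ℝ) / (4 * d * β)) * ((1 / 2) * Real.log (p / (1 - p)) - h) ^ 2)

/-! ### Auxiliary lemmas -/

/-- The logistic function, a bijection from `ℝ` onto `(0,1)`. -/
noncomputable def cwLogistic (u : ℝ) : ℝ := Real.exp u / (1 + Real.exp u)

lemma cwLogistic_denom_pos (u : ℝ) : 0 < 1 + Real.exp u := by positivity

lemma cwLogistic_mem (u : ℝ) : cwLogistic u ∈ Set.Ioo (0:ℝ) 1 := by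
  constructor
  · exact div_pos (Real.exp_pos u) (cwLogistic_denom_pos u)
  · rw [cwLogistic, div_lt_one (cwLogistic_denom_pos u)]; linarith

lemma one_sub_cwLogistic (u : ℝ) : 1 - cwLogistic u = 1 / (1 + Real.exp u) := by
  rw [cwLogistic]; field_simp; ring

lemma cwLogistic_ratio (u : ℝ) : cwLogistic u / (1 - cwLogistic u) = Real.exp u := by
  rw [one_sub_cwLogistic, cwLogistic]; field_simp

lemma cwLogistic_hasDerivAt (u : ℝ) :
    HasDerivAt cwLogistic (Real.exp u / (1 + Real.exp u) ^ 2) u := by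
  have h1 : HasDerivAt (fun u => Real.exp u) (Real.exp u) u := Real.hasDerivAt_exp u
  have h2 : HasDerivAt (fun u => 1 + Real.exp u) (Real.exp u) u := h1.const_add 1
  have := h1.div h2 (cwLogistic_denom_pos u).ne'
  convert this using 1
  have hE := (cwLogistic_denom_pos u).ne'
  rfl
  rfl
  rfl
  ring

lemma cwLogistic_injective : Function.Injective cwLogistic := by
  intro u v huv
  have h := cwLogistic_ratio u
  rw [huv, cwLogistic_ratio] at h
  exact Real.exp_injective h.symm

lemma cwLogistic_image : cwLogistic '' Set.univ = Set.Ioo (0:ℝ) 1 := by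
  apply Set.eq_of_subset_of_subset
  · rintro p ⟨u, -, rfl⟩; exact cwLogistic_mem u
  · rintro p ⟨hp0, hp1⟩
    refine ⟨Real.log (p / (1 - p)), trivial, ?_⟩
    have h1p : 0 < 1 - p := by linarith
    rw [cwLogistic, Real.exp_log (div_pos hp0 h1p)]
    field_simp
    ring

lemma cwLogistic_rpow (n : ℕ) (u : ℝ) :
    (cwLogistic u * (1 - cwLogistic u)) ^ (-(n:ℝ)/2)
      = Real.exp (-(n:ℝ)/2 * u) * (1 + Real.exp u) ^ n := by
  have hE := cwLogistic_denom_pos u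
  have hprod : cwLogistic u * (1 - cwLogistic u)
      = Real.exp u / (1 + Real.exp u) ^ 2 := by
    rw [one_sub_cwLogistic, cwLogistic]; field_simp
  rw [hprod, Real.div_rpow (Real.exp_pos u).le (by positivity),
    ← Real.exp_mul, mul_comm u (-(n:ℝ)/2)]
  rw [← Real.rpow_natCast (1 + Real.exp u) 2, ← Real.rpow_mul hE.le]
  rw [show ((2:ℕ):ℝ) * (-(n:ℝ)/2) = -(n:ℝ) by push_cast; ring]
  rw [Real.rpow_neg hE.le, ← Real.rpow_natCast (1 + Real.exp u) n]
  rw [div_eq_mul_inv, inv_inv]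

lemma gauss_sq (c S h t : ℝ) (hc : c ≠ 0) :
    S * t - c * (t - h) ^ 2
      = -c * (t - (h + S / (2 * c))) ^ 2 + (S * h + S ^ 2 / (4 * c)) := by
  field_simp
  ring

lemma gauss_lin (c S h : ℝ) (hc : 0 < c) :
    (∫ t : ℝ, Real.exp (S * t - c * (t - h) ^ 2))
      = Real.sqrt (Real.pi / c) * Real.exp (S * h + S ^ 2 / (4 * c)) := by
  have heq : (fun t : ℝ => Real.exp (S * t - c * (t - h) ^ 2))
      = fun t => Real.exp (-c * (t - (h + S / (2 * c))) ^ 2)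
          * Real.exp (S * h + S ^ 2 / (4 * c)) := by
    funext t
    rw [← Real.exp_add, gauss_sq c S h t hc.ne']
  rw [heq, integral_mul_const]
  congr 1
  have := integral_sub_right_eq_self (μ := volume)
    (fun t : ℝ => Real.exp (-c * t ^ 2)) (h + S / (2 * c))
  rw [this, integral_gaussian]

lemma gauss_lin_half_integrable (c S h : ℝ) (hc : 0 < c) :
    Integrable (fun u : ℝ => Real.exp (S * (u / 2) - c * (u / 2 - h) ^ 2)) := by
  have heq : (fun u : ℝ => Real.exp (S * (u / 2) - c * (u / 2 - h) ^ 2))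
      = fun u => Real.exp (-(c/4) * (u - 2 * (h + S / (2 * c))) ^ 2)
          * Real.exp (S * h + S ^ 2 / (4 * c)) := by
    funext u
    rw [← Real.exp_add]
    congr 1
    have := gauss_sq c S h (u / 2) hc.ne'
    rw [this]
    ring
  rw [heq]
  exact ((integrable_exp_neg_mul_sq (by positivity)).comp_sub_right _).mul_const _

lemma cwZ_pos (n d : ℕ) (β h : ℝ) : 0 < cwZ n d β h := by
  rw [cwZ]
  exact Finset.sum_pos (fun σ _ => Real.exp_pos _) Finset.univ_nonempty

/-- The key pointwise identity after the change of variables `p = cwLogistic u`. -/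
lemma cw_pointwise (n d : ℕ) (β h : ℝ) (k m : ℕ) (hkm : k + m = n) (u : ℝ) :
    |Real.exp u / (1 + Real.exp u) ^ 2| *
      (cwLogistic u ^ k * (1 - cwLogistic u) ^ m * cwMixDensity n d β h (cwLogistic u))
    = (1 / cwZ n d β h) * Real.sqrt ((n : ℝ) / (Real.pi * d * β)) * (1/4) *
        Real.exp (((k:ℝ) - m) * (u/2) - ((n:ℝ)/(4*(d:ℝ)*β)) * (u/2 - h) ^ 2) := by
  subst hkm
  have hE := cwLogistic_denom_pos u
  have he := Real.exp_pos u
  have hexp : Real.exp (((k:ℝ) - m) * (u/2) - (((k+m:ℕ):ℝ))/(4*(d:ℝ)*β) * (u/2 - h) ^ 2)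
      = Real.exp u ^ k * (Real.exp (-(((k+m:ℕ)):ℝ)/2 * u)
          * Real.exp (-((((k+m:ℕ)):ℝ) / (4 * (d:ℝ) * β)) * ((1/2) * u - h) ^ 2)) := by
    rw [← Real.exp_nat_mul, ← Real.exp_add, ← Real.exp_add]
    congr 1
    push_cast
    ring
  rw [cwMixDensity, cwLogistic_ratio, Real.log_exp, cwLogistic_rpow, hexp,
    abs_of_pos (by positivity), one_sub_cwLogistic, cwLogistic]
  set a : ℝ := Real.exp u with ha
  set E : ℝ := 1 + a with hEdef
  set W : ℝ := Real.sqrt ((((k+m:ℕ)):ℝ) / (Real.pi * d * β)) with hW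
  set X : ℝ := Real.exp (-(((k+m:ℕ)):ℝ)/2 * u) with hX
  set Y : ℝ := Real.exp (-((((k+m:ℕ)):ℝ) / (4 * (d:ℝ) * β)) * ((1/2) * u - h) ^ 2) with hY
  set ZZ : ℝ := cwZ (k+m) d β h with hZZ
  have hZne : ZZ ≠ 0 := (cwZ_pos (k+m) d β h).ne'
  have h1 : (a / E) ^ k = a ^ k / E ^ k := div_pow a E k
  have h2 : ((1:ℝ) / E) ^ m = 1 / E ^ m := by rw [div_pow, one_pow]
  have h3 : 1 / (4 * (a / E) * (1 / E)) = E ^ 2 / (4 * a) := by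
    rw [div_eq_div_iff (by positivity) (by positivity)]
    field_simp
  have h4 : E ^ (k + m) = E ^ k * E ^ m := pow_add E k m
  rw [h1, h2, h3, h4]
  field_simp

/-- The central computation: integral of a Bernoulli kernel against the mixing density. -/
lemma cw_key (n d : ℕ) (hn : 1 ≤ n) (hd : 0 < d) (β h : ℝ) (hβ : 0 < β)
    (k m : ℕ) (hkm : k + m = n) :
    IntegrableOn (fun p => p ^ k * (1-p) ^ m * cwMixDensity n d β h p)
      (Set.Ioo (0:ℝ) 1) volume ∧
    (∫ p in Set.Ioo (0:ℝ) 1, p ^ k * (1-p) ^ m * cwMixDensity n d β h p)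
      = Real.exp ((d:ℝ) * β / n * ((k:ℝ) - m) ^ 2 + h * ((k:ℝ) - m)) / cwZ n d β h := by
  have hn0 : (0:ℝ) < n := by exact_mod_cast hn
  have hd0 : (0:ℝ) < d := by exact_mod_cast hd
  set c : ℝ := (n:ℝ)/(4*(d:ℝ)*β) with hc_def
  have hc : 0 < c := by positivity
  set S : ℝ := (k:ℝ) - m with hS_def
  set Z : ℝ := cwZ n d β h with hZ_def
  set R : ℝ := Real.sqrt ((n:ℝ)/(Real.pi*d*β)) with hR_def
  set g : ℝ → ℝ := fun p => p ^ k * (1-p) ^ m * cwMixDensity n d β h p with hg_def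
  have hderiv : ∀ x ∈ (Set.univ : Set ℝ),
      HasDerivWithinAt cwLogistic (Real.exp x / (1 + Real.exp x) ^ 2) Set.univ x :=
    fun x _ => (cwLogistic_hasDerivAt x).hasDerivWithinAt
  have hinj : Set.InjOn cwLogistic Set.univ := cwLogistic_injective.injOn
  have hpt : (fun u : ℝ => |Real.exp u / (1 + Real.exp u) ^ 2| • g (cwLogistic u))
      = fun u => (1/Z) * R * (1/4) * Real.exp (S * (u/2) - c * (u/2 - h) ^ 2) := by
    funext u
    rw [smul_eq_mul]
    exact cw_pointwise n d β h k m hkm u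
  have hsqrt : R * Real.sqrt (Real.pi / c) = 2 := by
    rw [hR_def, ← Real.sqrt_mul (by positivity)]
    rw [show (n:ℝ)/(Real.pi*d*β) * (Real.pi / c) = 4 by
      rw [hc_def]
      field_simp]
    rw [show (4:ℝ) = 2 ^ 2 by norm_num, Real.sqrt_sq (by norm_num)]
  constructor
  · rw [← cwLogistic_image,
      integrableOn_image_iff_integrableOn_abs_deriv_smul MeasurableSet.univ hderiv hinj]
    rw [IntegrableOn, Measure.restrict_univ, hpt]
    exact (gauss_lin_half_integrable c S h hc).const_mul _
  · rw [← cwLogistic_image,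
      integral_image_eq_integral_abs_deriv_smul MeasurableSet.univ hderiv hinj]
    rw [Measure.restrict_univ, hpt, MeasureTheory.integral_const_mul]
    have h2 : (fun u : ℝ => Real.exp (S * (u/2) - c * (u/2 - h) ^ 2))
        = fun u => (fun t => Real.exp (S * t - c * (t - h) ^ 2)) ((2:ℝ)⁻¹ * u) := by
      funext u
      simp only
      rw [show (2:ℝ)⁻¹ * u = u / 2 by ring]
    rw [h2, Measure.integral_comp_mul_left
      (fun t => Real.exp (S * t - c * (t - h) ^ 2)) (2:ℝ)⁻¹, gauss_lin c S h hc]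
    have habs : |((2:ℝ)⁻¹)⁻¹| = 2 := by norm_num
    rw [habs, smul_eq_mul]
    have hexp : S * h + S ^ 2 / (4 * c) = (d:ℝ) * β / n * S ^ 2 + h * S := by
      rw [hc_def]
      field_simp
      ring
    calc (1/Z) * R * (1/4) * (2 * (Real.sqrt (Real.pi / c) * Real.exp (S*h + S^2/(4*c))))
        = (R * Real.sqrt (Real.pi / c)) * ((1/4) * 2) * Real.exp (S*h + S^2/(4*c)) / Z := by
          ring
      _ = Real.exp ((d:ℝ) * β / n * S ^ 2 + h * S) / Z := by
          rw [hsqrt, hexp]; ring_nf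

lemma sum_spin (n : ℕ) (σ : Fin n → Bool) :
    ∑ j, spin (σ j) = ((Finset.univ.filter fun i => σ i = true).card : ℝ)
      - ((Finset.univ.filter fun i => σ i = false).card : ℝ) := by
  rw [← Finset.sum_filter_add_sum_filter_not Finset.univ (fun i => σ i = true)]
  have h1 : ∀ i ∈ Finset.univ.filter (fun i => σ i = true), spin (σ i) = 1 := by
    intro i hi
    simp only [Finset.mem_filter] at hi
    simp [spin, hi.2]
  have h2 : ∀ i ∈ Finset.univ.filter (fun i => ¬ (σ i = true)), spin (σ i) = -1 := by
    intro i hi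
    simp only [Finset.mem_filter, Bool.not_eq_true] at hi
    simp [spin, hi.2]
  rw [Finset.sum_congr rfl h1, Finset.sum_congr rfl h2, Finset.sum_const, Finset.sum_const]
  have h3 : Finset.univ.filter (fun i => ¬ (σ i = true))
      = Finset.univ.filter (fun i => σ i = false) := by
    apply Finset.filter_congr
    intro i _
    simp [Bool.not_eq_true]
  rw [h3]
  simp [nsmul_eq_mul]
  ring

lemma card_filter_spin (n : ℕ) (σ : Fin n → Bool) :
    (Finset.univ.filter fun i => σ i = true).card
      + (Finset.univ.filter fun i => σ i = false).card = n := by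
  have h3 : Finset.univ.filter (fun i => ¬ (σ i = true))
      = Finset.univ.filter (fun i => σ i = false) := by
    apply Finset.filter_congr
    intro i _
    simp [Bool.not_eq_true]
  rw [← h3, Finset.card_filter_add_card_filter_not, Finset.card_univ,
    Fintype.card_fin]

set_option maxHeartbeats 1000000 in
lemma bernoulli_sum_one (n : ℕ) (p : ℝ) :
    (∑ τ : Fin n → Bool, p ^ (Finset.univ.filter fun i => τ i = true).card
        * (1-p) ^ (Finset.univ.filter fun i => τ i = false).card) = 1 := by
  have key : ∀ τ : Fin n → Bool,
      (∏ i, if τ i = true then p else 1 - p)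
      = p ^ (Finset.univ.filter fun i => τ i = true).card
          * (1-p) ^ (Finset.univ.filter fun i => τ i = false).card := by
    intro τ
    rw [Finset.prod_ite]
    have h3 : Finset.univ.filter (fun x => ¬ (τ x = true))
        = Finset.univ.filter (fun i => τ i = false) :=
      Finset.filter_congr (fun i _ => by simp [Bool.not_eq_true])
    rw [h3, Finset.prod_const, Finset.prod_const]
  calc (∑ τ : Fin n → Bool, p ^ (Finset.univ.filter fun i => τ i = true).card
        * (1-p) ^ (Finset.univ.filter fun i => τ i = false).card)
      = ∑ τ : Fin n → Bool, ∏ i, if τ i = true then p else 1 - p :=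
        Finset.sum_congr rfl fun τ _ => (key τ).symm
    _ = ∏ _i : Fin n, ∑ b : Bool, (if b = true then p else 1 - p) :=
      by exact (Fintype.prod_sum (fun (_ : Fin n) (b : Bool) => if b = true then p else 1 - p)).symm
    _ = ∏ _i : Fin n, (1:ℝ) := Finset.prod_congr rfl fun i _ => by
        rw [Fintype.sum_bool]
        norm_num
    _ = 1 := Finset.prod_const_one

/-- The Curie-Weiss model is a mixture of laws of i.i.d. Bernoulli random variables:
`ν` (given by the density `cwMixDensity`) is a probability measure on `(0,1)` and for every
configuration `σ`,
`P(ε = σ) = ∫_0^1 p^{#{i : σ_i = 1}} (1-p)^{#{i : σ_i = -1}} ν(dp)`. -/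
theorem curie_weiss_bernoulli_mixture (n d : ℕ) (hn : 1 ≤ n) (hd : 0 < d) (β h : ℝ)
    (hβ : 0 < β) (σ : Fin n → Bool) :
    (∫ p in Set.Ioo (0 : ℝ) 1, cwMixDensity n d β h p) = 1 ∧
    cwWeight n d β h σ / cwZ n d β h
      = ∫ p in Set.Ioo (0 : ℝ) 1,
          p ^ (Finset.univ.filter fun i => σ i = true).card
            * (1 - p) ^ (Finset.univ.filter fun i => σ i = false).card
            * cwMixDensity n d β h p := by
  have hweight : ∀ τ : Fin n → Bool, cwWeight n d β h τ
      = Real.exp ((d:ℝ) * β / n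
          * (((Finset.univ.filter fun i => τ i = true).card : ℝ)
              - ((Finset.univ.filter fun i => τ i = false).card : ℝ)) ^ 2
        + h * (((Finset.univ.filter fun i => τ i = true).card : ℝ)
              - ((Finset.univ.filter fun i => τ i = false).card : ℝ))) := by
    intro τ
    rw [cwWeight, sum_spin]
  constructor
  · have h1 : (fun p : ℝ => cwMixDensity n d β h p)
        = fun p => ∑ τ : Fin n → Bool,
            p ^ (Finset.univ.filter fun i => τ i = true).card
              * (1-p) ^ (Finset.univ.filter fun i => τ i = false).card
              * cwMixDensity n d β h p := by
      funext p
      rw [← Finset.sum_mul, bernoulli_sum_one, one_mul]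
    calc (∫ p in Set.Ioo (0 : ℝ) 1, cwMixDensity n d β h p)
        = ∫ p in Set.Ioo (0 : ℝ) 1, ∑ τ : Fin n → Bool,
            p ^ (Finset.univ.filter fun i => τ i = true).card
              * (1-p) ^ (Finset.univ.filter fun i => τ i = false).card
              * cwMixDensity n d β h p := by rw [← h1]
      _ = ∑ τ : Fin n → Bool, ∫ p in Set.Ioo (0 : ℝ) 1,
            p ^ (Finset.univ.filter fun i => τ i = true).card
              * (1-p) ^ (Finset.univ.filter fun i => τ i = false).card
              * cwMixDensity n d β h p := by
          refine integral_finset_sum _ fun τ _ => ?_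
          exact (cw_key n d hn hd β h hβ _ _ (card_filter_spin n τ)).1
      _ = ∑ τ : Fin n → Bool, cwWeight n d β h τ / cwZ n d β h := by
          refine Finset.sum_congr rfl fun τ _ => ?_
          rw [(cw_key n d hn hd β h hβ _ _ (card_filter_spin n τ)).2, hweight τ]
      _ = 1 := by
          rw [← Finset.sum_div, ← cwZ]
          exact div_self (cwZ_pos n d β h).ne'
  · rw [(cw_key n d hn hd β h hβ _ _ (card_filter_spin n σ)).2, hweight σ]
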